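/- The Cayley hyperdeterminant Δ is a relative invariant of the SLOCC action: for every ψ ∈ ℂ² ⊗ ℂ² ⊗ ℂ² and all invertible 2×2 complex matrices g₁, g₂, g₃, one has Δ((g₁ ⊗ g₂ ⊗ g₃)(ψ)) = (det g₁)² (det g₂)² (det g₃)² · Δ(ψ). In particular Δ is invariant under SL₂(ℂ) × SL₂(ℂ) × SL₂(ℂ). -/

import Mathlib

open TensorProduct

noncomputable section

/-- The single-qubit space ℂ². -/
abbrev Qubit : Type := Fin 2 → ℂ

/-- The three-qubit Hilbert space ℂ² ⊗ ℂ² ⊗ ℂ². -/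
abbrev ThreeQubit : Type := Qubit ⊗[ℂ] (Qubit ⊗[ℂ] Qubit)

/-- Standard basis vector e₀ of ℂ². -/
def e0 : Qubit := ![1, 0]

/-- Standard basis vector e₁ of ℂ². -/
def e1 : Qubit := ![0, 1]

/-- SLOCC equivalence: ψ and φ are related by invertible local linear maps. -/
def SLOCC (ψ φ : ThreeQubit) : Prop :=
  ∃ g₁ g₂ g₃ : Qubit ≃ₗ[ℂ] Qubit,
    TensorProduct.map g₁.toLinearMap
      (TensorProduct.map g₂.toLinearMap g₃.toLinearMap) ψ = φ

def SepState : ThreeQubit := e0 ⊗ₜ[ℂ] (e0 ⊗ₜ[ℂ] e0)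
def B1 : ThreeQubit := e0 ⊗ₜ[ℂ] (e0 ⊗ₜ[ℂ] e0) + e0 ⊗ₜ[ℂ] (e1 ⊗ₜ[ℂ] e1)
def B2 : ThreeQubit := e0 ⊗ₜ[ℂ] (e0 ⊗ₜ[ℂ] e0) + e1 ⊗ₜ[ℂ] (e0 ⊗ₜ[ℂ] e1)
def B3 : ThreeQubit := e0 ⊗ₜ[ℂ] (e0 ⊗ₜ[ℂ] e0) + e1 ⊗ₜ[ℂ] (e1 ⊗ₜ[ℂ] e0)
def W : ThreeQubit := e1 ⊗ₜ[ℂ] (e0 ⊗ₜ[ℂ] e0) + e0 ⊗ₜ[ℂ] (e1 ⊗ₜ[ℂ] e0) + e0 ⊗ₜ[ℂ] (e0 ⊗ₜ[ℂ] e1)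
def GHZ : ThreeQubit := e0 ⊗ₜ[ℂ] (e0 ⊗ₜ[ℂ] e0) + e1 ⊗ₜ[ℂ] (e1 ⊗ₜ[ℂ] e1)

/-- The standard basis e_i ⊗ e_j ⊗ e_k of the three-qubit space. -/
def stdBasis : Module.Basis (Fin 2 × Fin 2 × Fin 2) ℂ ThreeQubit :=
  (Pi.basisFun ℂ (Fin 2)).tensorProduct
    ((Pi.basisFun ℂ (Fin 2)).tensorProduct (Pi.basisFun ℂ (Fin 2)))

/-- Cayley's hyperdeterminant, written in the coordinates a_{ijk} of ψ with respect to
the standard basis e_i⊗e_j⊗e_k. -/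
def Δ (ψ : ThreeQubit) : ℂ :=
  let a : Fin 2 → Fin 2 → Fin 2 → ℂ := fun i j k => stdBasis.repr ψ (i, j, k)
  a 0 0 0 ^ 2 * a 1 1 1 ^ 2 + a 0 0 1 ^ 2 * a 1 1 0 ^ 2
    + a 0 1 0 ^ 2 * a 1 0 1 ^ 2 + a 1 0 0 ^ 2 * a 0 1 1 ^ 2
    - 2 * (a 0 0 0 * a 0 0 1 * a 1 1 0 * a 1 1 1
         + a 0 0 0 * a 0 1 0 * a 1 0 1 * a 1 1 1
         + a 0 0 0 * a 0 1 1 * a 1 0 0 * a 1 1 1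
         + a 0 0 1 * a 0 1 0 * a 1 0 1 * a 1 1 0
         + a 0 0 1 * a 0 1 1 * a 1 1 0 * a 1 0 0
         + a 0 1 0 * a 0 1 1 * a 1 0 1 * a 1 0 0)
    + 4 * (a 0 0 0 * a 0 1 1 * a 1 0 1 * a 1 1 0
         + a 0 0 1 * a 0 1 0 * a 1 0 0 * a 1 1 1)

/-! The matrix of `g₁ ⊗ g₂ ⊗ g₃` in the basis `e_i ⊗ e_j ⊗ e_k` is the Kronecker product
`g₁ ⊗ₖ g₂ ⊗ₖ g₃`, which factors as `(g₁ ⊗ₖ 1 ⊗ₖ 1) (1 ⊗ₖ g₂ ⊗ₖ 1) (1 ⊗ₖ 1 ⊗ₖ g₃)`. It therefore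
suffices to let a single matrix act on a single tensor factor, where the claim
`Δ ↦ (det g)² Δ` is a polynomial identity in the eight coordinates and the four entries of `g`. -/

open Matrix
open scoped Kronecker

theorem map_toLin'_eq_toLin_kronecker (g₁ g₂ g₃ : Matrix (Fin 2) (Fin 2) ℂ) :
    TensorProduct.map (toLin' g₁) (TensorProduct.map (toLin' g₂) (toLin' g₃)) =
      toLin stdBasis stdBasis (g₁ ⊗ₖ (g₂ ⊗ₖ g₃)) := by
  rw [← toLin_eq_toLin', ← toLin_kronecker, ← toLin_kronecker]
  rfl

theorem stdBasis_repr_toLin_kronecker_apply (g₁ g₂ g₃ : Matrix (Fin 2) (Fin 2) ℂ)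
    (ψ : ThreeQubit) (i j k : Fin 2) :
    stdBasis.repr (toLin stdBasis stdBasis (g₁ ⊗ₖ (g₂ ⊗ₖ g₃)) ψ) (i, j, k) =
      ∑ a, ∑ b, ∑ c, g₁ i a * (g₂ j b * g₃ k c) * stdBasis.repr ψ (a, b, c) := by
  simp only [repr_toLin, mulVec, dotProduct, Fintype.sum_prod_type, kroneckerMap_apply]

theorem Δ_toLin_kronecker_left (g : Matrix (Fin 2) (Fin 2) ℂ) (ψ : ThreeQubit) :
    Δ (toLin stdBasis stdBasis (g ⊗ₖ (1 ⊗ₖ 1)) ψ) = g.det ^ 2 * Δ ψ := by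
  simp only [Δ, stdBasis_repr_toLin_kronecker_apply, one_apply, mul_ite, ite_mul, mul_one,
    mul_zero, zero_mul, Finset.sum_ite_eq, Finset.mem_univ, if_true, Fin.sum_univ_two,
    det_fin_two]
  ring

theorem Δ_toLin_kronecker_middle (g : Matrix (Fin 2) (Fin 2) ℂ) (ψ : ThreeQubit) :
    Δ (toLin stdBasis stdBasis (1 ⊗ₖ (g ⊗ₖ 1)) ψ) = g.det ^ 2 * Δ ψ := by
  simp only [Δ, stdBasis_repr_toLin_kronecker_apply, one_apply, mul_ite, ite_mul, mul_one,
    one_mul, mul_zero, zero_mul, Finset.sum_ite_eq, Finset.sum_ite_irrel, Finset.sum_const_zero,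
    Finset.mem_univ, if_true, Fin.sum_univ_two, det_fin_two]
  ring

theorem Δ_toLin_kronecker_right (g : Matrix (Fin 2) (Fin 2) ℂ) (ψ : ThreeQubit) :
    Δ (toLin stdBasis stdBasis (1 ⊗ₖ (1 ⊗ₖ g)) ψ) = g.det ^ 2 * Δ ψ := by
  simp only [Δ, stdBasis_repr_toLin_kronecker_apply, one_apply, mul_ite, ite_mul, one_mul,
    mul_zero, zero_mul, Finset.sum_ite_eq, Finset.sum_ite_irrel, Finset.sum_const_zero,
    Finset.mem_univ, if_true, Fin.sum_univ_two, det_fin_two]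
  ring

theorem kronecker_kronecker_eq_mul_mul (g₁ g₂ g₃ : Matrix (Fin 2) (Fin 2) ℂ) :
    g₁ ⊗ₖ (g₂ ⊗ₖ g₃) = (g₁ ⊗ₖ (1 ⊗ₖ 1)) * (1 ⊗ₖ (g₂ ⊗ₖ 1)) * (1 ⊗ₖ (1 ⊗ₖ g₃)) := by
  simp only [← mul_kronecker_mul, mul_one, one_mul]

theorem Δ_map_toLin' (g₁ g₂ g₃ : Matrix (Fin 2) (Fin 2) ℂ) (ψ : ThreeQubit) :
    Δ (TensorProduct.map (toLin' g₁) (TensorProduct.map (toLin' g₂) (toLin' g₃)) ψ) =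
      g₁.det ^ 2 * g₂.det ^ 2 * g₃.det ^ 2 * Δ ψ := by
  rw [map_toLin'_eq_toLin_kronecker, kronecker_kronecker_eq_mul_mul, toLin_mul stdBasis stdBasis,
    toLin_mul stdBasis stdBasis, LinearMap.comp_apply, LinearMap.comp_apply,
    Δ_toLin_kronecker_left, Δ_toLin_kronecker_middle, Δ_toLin_kronecker_right]
  ring

/-- Cayley's hyperdeterminant is a relative SLOCC invariant of weight (2,2,2):
under invertible local matrices it rescales by the squared determinants. In particular
it is invariant under SL₂(ℂ) × SL₂(ℂ) × SL₂(ℂ). -/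
theorem hyperdeterminant_relative_invariant :
    (∀ (ψ : ThreeQubit) (g₁ g₂ g₃ : Matrix (Fin 2) (Fin 2) ℂ),
        IsUnit g₁.det → IsUnit g₂.det → IsUnit g₃.det →
        Δ (TensorProduct.map (Matrix.toLin' g₁)
            (TensorProduct.map (Matrix.toLin' g₂) (Matrix.toLin' g₃)) ψ)
          = g₁.det ^ 2 * g₂.det ^ 2 * g₃.det ^ 2 * Δ ψ) ∧
    (∀ (ψ : ThreeQubit) (g₁ g₂ g₃ : Matrix (Fin 2) (Fin 2) ℂ),
        g₁.det = 1 → g₂.det = 1 → g₃.det = 1 →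
        Δ (TensorProduct.map (Matrix.toLin' g₁)
            (TensorProduct.map (Matrix.toLin' g₂) (Matrix.toLin' g₃)) ψ) = Δ ψ) := by
  refine ⟨fun ψ g₁ g₂ g₃ _ _ _ => Δ_map_toLin' g₁ g₂ g₃ ψ, fun ψ g₁ g₂ g₃ h₁ h₂ h₃ => ?_⟩
  rw [Δ_map_toLin', h₁, h₂, h₃]
  ring

end
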